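/- arXiv:1911.06317 — 4 statements merged into one kernel-verified Lean document; each statement's English description precedes it below -/
import Mathlib

section
/- Let f : ℝⁿ → ℝ be differentiable, α-strongly convex and β-smooth with α, β > 0 and global minimizer x*, let g : ℝ → ℝ be strictly monotonically increasing, and let h = g ∘ f. Then for every x ∈ ℝⁿ there exist a point c ∈ ℝⁿ and a radius ρ ≥ (α/β)·‖x − x*‖ such that ‖x − c‖ = ρ (so x lies on the boundary of the ball) and the closed ball of radius ρ centered at c is contained in the sublevel set {y ∈ ℝⁿ : h(y) ≤ h(x)}. -/
open RealInnerProductSpace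

/-- Lemma A.1 (enclosed-ball lemma): for a monotone transform `h = g ∘ f` of an
`α`-strongly convex, `β`-smooth `f` with minimizer `x*`, every point `x` is tangent
to a ball of radius at least `(α/β)‖x − x*‖` contained in the sublevel set of `h`
at `x`. -/
theorem gld_enclosed_ball
    (n : ℕ)
    (f : EuclideanSpace ℝ (Fin n) → ℝ)
    (α β : ℝ) (hα : 0 < α) (hβ : 0 < β)
    (hdiff : Differentiable ℝ f)
    (hsc : ∀ x y : EuclideanSpace ℝ (Fin n),
      f x + ⟪gradient f x, y - x⟫ + α / 2 * ‖y - x‖ ^ 2 ≤ f y)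
    (hsm : ∀ x y : EuclideanSpace ℝ (Fin n),
      f y ≤ f x + ⟪gradient f x, y - x⟫ + β / 2 * ‖y - x‖ ^ 2)
    (xstar : EuclideanSpace ℝ (Fin n)) (hmin : ∀ y, f xstar ≤ f y)
    (g : ℝ → ℝ) (hg : StrictMono g)
    (h : EuclideanSpace ℝ (Fin n) → ℝ) (hh : h = g ∘ f)
    (x : EuclideanSpace ℝ (Fin n)) :
    ∃ (c : EuclideanSpace ℝ (Fin n)) (ρ : ℝ),
      α / β * ‖x - xstar‖ ≤ ρ ∧ ‖x - c‖ = ρ ∧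
      Metric.closedBall c ρ ⊆ {y | h y ≤ h x} := by
  set G := gradient f x with hG
  refine ⟨x - β⁻¹ • G, ‖G‖ / β, ?_, ?_, ?_⟩
  · -- α‖x - x*‖ ≤ ‖G‖ via strong convexity and Cauchy-Schwarz
    -- first: gradient vanishes at the minimizer
    have hstar : gradient f xstar = 0 := by
      set gs := gradient f xstar with hgs
      by_contra hne
      have h1 := hsm xstar (xstar - β⁻¹ • gs)
      have h2 := hmin (xstar - β⁻¹ • gs)
      have he1 : xstar - β⁻¹ • gs - xstar = -(β⁻¹ • gs) := by abel
      rw [he1] at h1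
      rw [inner_neg_right, norm_neg, norm_smul, norm_inv, Real.norm_eq_abs,
        abs_of_pos hβ, real_inner_smul_right, real_inner_self_eq_norm_sq] at h1
      have hgpos : 0 < ‖gs‖ := norm_pos_iff.mpr hne
      have hβne : β ≠ 0 := ne_of_gt hβ
      have : β / 2 * (β⁻¹ * ‖gs‖) ^ 2 = β⁻¹ / 2 * ‖gs‖ ^ 2 := by
        field_simp
      rw [this, ← hgs] at h1
      nlinarith [mul_pos (inv_pos.mpr hβ) (pow_pos hgpos 2)]
    have h1 := hsc x xstar
    have h1' := hsc xstar x
    rw [hstar] at h1'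
    simp only [inner_zero_left] at h1'
    have h3 : α * ‖x - xstar‖ ^ 2 ≤ ⟪G, x - xstar⟫ := by
      have hcomm : ⟪G, xstar - x⟫ = - ⟪G, x - xstar⟫ := by
        rw [← inner_neg_right]; congr 1; abel
      rw [hcomm] at h1
      have hd : ‖xstar - x‖ = ‖x - xstar‖ := by rw [norm_sub_rev]
      rw [hd] at h1
      linarith
    have h4 : ⟪G, x - xstar⟫ ≤ ‖G‖ * ‖x - xstar‖ := real_inner_le_norm G (x - xstar)
    rcases eq_or_ne x xstar with he | he
    · simp [he]
      positivity
    · have hdpos : 0 < ‖x - xstar‖ := by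
        rw [norm_pos_iff, sub_ne_zero]; exact he
      rw [div_mul_eq_mul_div, div_le_div_iff₀ hβ hβ]
      have : α * ‖x - xstar‖ ≤ ‖G‖ := by
        nlinarith
      nlinarith
  · rw [sub_sub_cancel, norm_smul, norm_inv, Real.norm_eq_abs, abs_of_pos hβ,
      inv_mul_eq_div]
  · intro y hy
    simp only [Metric.mem_closedBall, dist_eq_norm] at hy
    have hy' : ‖(y - x) + β⁻¹ • G‖ ≤ ‖G‖ / β := by
      have : y - (x - β⁻¹ • G) = (y - x) + β⁻¹ • G := by abel
      rwa [this] at hy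
    have hsq : ‖(y - x) + β⁻¹ • G‖ ^ 2 ≤ (‖G‖ / β) ^ 2 := by
      have := norm_nonneg ((y - x) + β⁻¹ • G)
      nlinarith
    rw [norm_add_sq_real] at hsq
    have hi : ⟪y - x, β⁻¹ • G⟫ = β⁻¹ * ⟪G, y - x⟫ := by
      rw [real_inner_smul_right, real_inner_comm]
    have hn : ‖β⁻¹ • G‖ ^ 2 = β⁻¹ ^ 2 * ‖G‖ ^ 2 := by
      rw [norm_smul, mul_pow, norm_inv, Real.norm_eq_abs, abs_of_pos hβ]
    rw [hi, hn] at hsq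
    have key : ⟪G, y - x⟫ + β / 2 * ‖y - x‖ ^ 2 ≤ 0 := by
      have hβi : β⁻¹ = 1 / β := by rw [one_div]
      have h5 : ‖y - x‖ ^ 2 + 2 * (β⁻¹ * ⟪G, y - x⟫) ≤ 0 := by
        have : (‖G‖ / β) ^ 2 = β⁻¹ ^ 2 * ‖G‖ ^ 2 := by
          field_simp
        linarith [hsq, this ▸ hsq]
      have := mul_le_mul_of_nonneg_left h5 (le_of_lt (half_pos hβ))
      rw [mul_zero] at this
      have hβne : β ≠ 0 := ne_of_gt hβ
      calc ⟪G, y - x⟫ + β / 2 * ‖y - x‖ ^ 2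
          = β / 2 * (‖y - x‖ ^ 2 + 2 * (β⁻¹ * ⟪G, y - x⟫)) := by
            field_simp; ring
        _ ≤ 0 := this
    have hfy : f y ≤ f x := by
      have := hsm x y
      linarith
    simp only [Set.mem_setOf_eq, hh, Function.comp_apply]
    exact hg.le_iff_le.mpr hfy
end

section
/- Let f : ℝⁿ → ℝ be differentiable and β-smooth with β > 0. Then for every x ∈ ℝⁿ, the closed ball of radius ‖∇f(x)‖/β centered at x − (1/β)·∇f(x) is contained in the sublevel set {y ∈ ℝⁿ : f(y) ≤ f(x)}. -/
open RealInnerProductSpace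

/-- Key containment in the proof of the enclosed-ball lemma: for a `β`-smooth `f`,
the closed ball of radius `‖∇f(x)‖/β` centered at `x − (1/β)∇f(x)` lies in the
sublevel set of `f` at `x`. -/
theorem gld_smooth_ball_in_sublevel
    (n : ℕ)
    (f : EuclideanSpace ℝ (Fin n) → ℝ)
    (β : ℝ) (hβ : 0 < β)
    (hdiff : Differentiable ℝ f)
    (hsm : ∀ x y : EuclideanSpace ℝ (Fin n),
      f y ≤ f x + ⟪gradient f x, y - x⟫ + β / 2 * ‖y - x‖ ^ 2)
    (x : EuclideanSpace ℝ (Fin n)) :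
    Metric.closedBall (x - (1 / β) • gradient f x) (‖gradient f x‖ / β) ⊆
      {y | f y ≤ f x} := by
  intro y hy
  simp only [Metric.mem_closedBall, Set.mem_setOf_eq] at *
  set g := gradient f x with hg
  have h := hsm x y
  have heq : y - (x - (1 / β) • g) = y - x + (1 / β) • g := by
    abel
  rw [dist_eq_norm, heq] at hy
  have hy2 : ‖y - x + (1 / β) • g‖ ^ 2 ≤ (‖g‖ / β) ^ 2 :=
    pow_le_pow_left₀ (norm_nonneg _) hy 2
  have hsq := norm_add_sq_real (y - x) ((1 / β) • g)
  rw [real_inner_smul_right, norm_smul] at hsq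
  have hβ' : ‖(1 / β : ℝ)‖ = 1 / β := by
    rw [Real.norm_eq_abs, abs_of_pos (by positivity)]
  rw [hβ'] at hsq
  rw [real_inner_comm] at h
  have hb : β ≠ 0 := ne_of_gt hβ
  have key : ‖y - x‖ ^ 2 + 2 * (1 / β * ⟪y - x, g⟫) ≤ 0 := by
    have h3 : (1 / β * ‖g‖) ^ 2 = (‖g‖ / β) ^ 2 := by ring
    linarith [hy2, hsq.symm.trans_le hy2]
  have key2 : β * (‖y - x‖ ^ 2 + 2 * (1 / β * ⟪y - x, g⟫)) ≤ 0 :=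
    mul_nonpos_of_nonneg_of_nonpos hβ.le key
  have hcan : β * (1 / β) = 1 := mul_one_div_cancel hb
  have hring : β * (‖y - x‖ ^ 2 + 2 * (1 / β * ⟪y - x, g⟫))
      = β * ‖y - x‖ ^ 2 + 2 * (β * (1 / β)) * ⟪y - x, g⟫ := by ring
  rw [hring, hcan] at key2
  rw [← hg] at h
  linarith
end

section
/- Let n ≥ 1 be a natural number and let a ∈ [1, 2] be a real number. Set r₁ = a/(2√n), r₂ = 1 − 1/(4n), and c₁ = (1 + r₁² − r₂²)/2. Then c₁ > 0, c₁/r₁ ≤ 3/(4√n), and consequently 1 − c₁²/r₁² ≥ 1 − 9/(16n). -/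
/-- Cap-height computation in the proof of Lemma 3.2: with `r₁ = a/(2√n)` for `a ∈ [1,2]`,
`r₂ = 1 − 1/(4n)` and `c₁ = (1 + r₁² − r₂²)/2`, one has `c₁ > 0`, `c₁/r₁ ≤ 3/(4√n)`, and
hence `1 − c₁²/r₁² ≥ 1 − 9/(16n)`. -/
theorem gld_cap_height
    (n : ℕ) (hn : 1 ≤ n)
    (a : ℝ) (ha1 : 1 ≤ a) (ha2 : a ≤ 2)
    (r₁ r₂ c₁ : ℝ)
    (hr₁ : r₁ = a / (2 * Real.sqrt n))
    (hr₂ : r₂ = 1 - 1 / (4 * n))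
    (hc₁ : c₁ = (1 + r₁ ^ 2 - r₂ ^ 2) / 2) :
    0 < c₁ ∧ c₁ / r₁ ≤ 3 / (4 * Real.sqrt n) ∧
      1 - 9 / (16 * n) ≤ 1 - c₁ ^ 2 / r₁ ^ 2 := by
  have hn1 : (1 : ℝ) ≤ (n : ℝ) := by exact_mod_cast hn
  set s : ℝ := Real.sqrt n with hs
  have hs1 : (1 : ℝ) ≤ s := by
    rw [hs, show (1:ℝ) = Real.sqrt 1 by simp]
    exact Real.sqrt_le_sqrt hn1
  have hs0 : 0 < s := lt_of_lt_of_le one_pos hs1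
  have hsn : s * s = (n : ℝ) := Real.mul_self_sqrt (by linarith)
  have hnpos : (0:ℝ) < n := by linarith
  have ha0 : 0 < a := by linarith
  have hr1pos : 0 < r₁ := by rw [hr₁]; positivity
  have hr1sq : r₁ ^ 2 = a ^ 2 / (4 * n) := by
    rw [hr₁, div_pow, mul_pow, sq s, hsn]
    norm_num
  have hc₁' : c₁ = a ^ 2 / (8 * n) + 1 / (4 * n) - 1 / (32 * n ^ 2) := by
    rw [hc₁, hr1sq, hr₂]
    field_simp
    ring
  have hcpos : 0 < c₁ := by
    rw [hc₁']
    rw [div_add_div _ _ (by positivity) (by positivity),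
      div_sub_div _ _ (by positivity) (by positivity)]
    apply div_pos _ (by positivity)
    have h3 : (n:ℝ)^2 ≤ (n:ℝ)^3 := by nlinarith
    nlinarith [mul_nonneg (sq_nonneg a) (le_of_lt (show (0:ℝ) < (n:ℝ)^3 by positivity))]
  have hkey : c₁ * (8 * n) ≤ 3 * a := by
    rw [hc₁']
    have h : (a ^ 2 / (8 * n) + 1 / (4 * n) - 1 / (32 * n ^ 2)) * (8 * n)
        = a ^ 2 + 2 - 1 / (4 * n) := by
      field_simp
      ring
    rw [h]
    have h1 : 0 < 1 / (4 * (n:ℝ)) := by positivity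
    nlinarith
  have h2 : c₁ / r₁ ≤ 3 / (4 * s) := by
    rw [div_le_div_iff₀ hr1pos (by positivity), hr₁, ← mul_div_assoc,
      le_div_iff₀ (by positivity)]
    have h : c₁ * (4 * s) * (2 * s) = c₁ * (8 * (s * s)) := by ring
    rw [h, hsn]
    linarith [hkey]
  refine ⟨hcpos, h2, ?_⟩
  have h3 : c₁ ^ 2 / r₁ ^ 2 ≤ 9 / (16 * n) := by
    have := pow_le_pow_left₀ (le_of_lt (div_pos hcpos hr1pos)) h2 2
    rw [div_pow] at this
    calc c₁ ^ 2 / r₁ ^ 2 ≤ (3 / (4 * s)) ^ 2 := this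
      _ = 9 / (16 * n) := by rw [div_pow, mul_pow, sq s, hsn]; norm_num
  linarith
end

section
/- Let P : ℝⁿ → ℝⁿ be a linear map, let g, h : ℝⁿ → ℝ with |h(x)| ≤ δ for all x ∈ ℝⁿ (δ ≥ 0), and define f(x) = g(P x) + h(x). Assume x* is a global minimizer of f and the infimum m = inf_{z ∈ ℝⁿ} g(P z) is attained. Let γ ∈ (0, 1/2] and let x, y ∈ ℝⁿ satisfy g(P y) − m ≤ (g(P x) − m)·(1 − γ) and f(x) − f(x*) ≥ 12·δ/γ. Then f(y) − f(x*) ≤ (f(x) − f(x*))·(1 − γ/2). -/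
/-- Deterministic perturbation lemma (algebraic core of Theorem 3.5): with
`f = g ∘ P + h`, `|h| ≤ δ`, `x*` a global minimizer of `f`, and `m = inf g(P·)`
attained at `z₀`, if `g(P y) − m ≤ (g(P x) − m)(1 − γ)` and
`f(x) − f(x*) ≥ 12δ/γ` for `γ ∈ (0, 1/2]`, then
`f(y) − f(x*) ≤ (f(x) − f(x*))(1 − γ/2)`. -/
theorem gld_perturbation_lemma
    (n : ℕ)
    (P : EuclideanSpace ℝ (Fin n) →ₗ[ℝ] EuclideanSpace ℝ (Fin n))
    (g h : EuclideanSpace ℝ (Fin n) → ℝ)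
    (δ : ℝ) (hδ : 0 ≤ δ) (hh : ∀ x, |h x| ≤ δ)
    (f : EuclideanSpace ℝ (Fin n) → ℝ)
    (hf : f = fun x => g (P x) + h x)
    (xstar : EuclideanSpace ℝ (Fin n)) (hmin : ∀ y, f xstar ≤ f y)
    (z₀ : EuclideanSpace ℝ (Fin n)) (hz₀ : ∀ z, g (P z₀) ≤ g (P z))
    (m : ℝ) (hm : m = g (P z₀))
    (γ : ℝ) (hγ0 : 0 < γ) (hγ1 : γ ≤ 1 / 2)
    (x y : EuclideanSpace ℝ (Fin n))
    (hdecay : g (P y) - m ≤ (g (P x) - m) * (1 - γ))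
    (hgap : 12 * δ / γ ≤ f x - f xstar) :
    f y - f xstar ≤ (f x - f xstar) * (1 - γ / 2) := by
  have hhx := abs_le.mp (hh x)
  have hhy := abs_le.mp (hh y)
  have hhs := abs_le.mp (hh xstar)
  have hhz := abs_le.mp (hh z₀)
  have h1 := hmin z₀
  have h2 := hz₀ xstar
  have hgap' : 12 * δ ≤ (f x - f xstar) * γ := by
    rw [div_le_iff₀ hγ0] at hgap; linarith
  subst hf hm
  simp only at *
  nlinarith [mul_nonneg hδ hγ0.le, sq_nonneg γ, mul_le_mul_of_nonneg_right h2 hγ0.le]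
end
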